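/- arXiv:2106.12269 — 9 statements merged into one kernel-verified Lean document; each statement's English description precedes it below -/
import Mathlib

section
/- A greedy ordering procedure that repeatedly appends to an initially empty sequence any unordered vertex v for which some allowed parent set S ∈ D(v) satisfies S ⊆ (set of ordered vertices), terminates with a complete ordering of V if and only if there exists a choice function f with f(v) ∈ D(v) for each v such that the directed graph with edge set { (u,v) : u ∈ f(v) } is acyclic. -/
/-!
Indices in a complete greedy ordering strictly increase along the edges of the chosen parent
sets, so that choice is acyclic. Conversely, the transitive closure of an acyclic choice is a
strict order; listing the vertices along a linear extension of it (Szpilrajn) places every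
chosen parent before its child.
-/

theorem Relation.TransGen.lt_of_forall_rel_lt {α β : Type*} [Preorder β] {r : α → α → Prop}
    {g : α → β} (h : ∀ a b, r a b → g a < g b) {a b : α} (hab : Relation.TransGen r a b) :
    g a < g b := by
  simpa [Relation.transGen_eq_self] using hab.lift g h

theorem List.idxOf_lt_idxOf_of_pairwise {α : Type*} [DecidableEq α] {r : α → α → Prop}
    {L : List α} {a b : α} (hL : L.Pairwise r) (ha : a ∈ L) (hb : b ∈ L) (hab : a ≠ b)
    (hba : ¬ r b a) : L.idxOf a < L.idxOf b := by
  rcases lt_trichotomy (L.idxOf a) (L.idxOf b) with hlt | heq | hgt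
  · exact hlt
  · exact absurd ((List.idxOf_inj ha).1 heq) hab
  · have hrel := List.pairwise_iff_getElem.1 hL _ _ (List.idxOf_lt_length_iff.2 hb)
      (List.idxOf_lt_length_iff.2 ha) hgt
    simp only [List.getElem_idxOf] at hrel
    exact absurd hrel hba

theorem exists_list_idxOf_lt_of_isStrictOrder {α : Type*} [Fintype α] [DecidableEq α]
    (s : α → α → Prop) [IsStrictOrder α s] :
    ∃ L : List α, L.Nodup ∧ (∀ a, a ∈ L) ∧ ∀ a b, s a b → L.idxOf a < L.idxOf b := by
  let := partialOrderOfSO s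
  obtain ⟨t, ht, hle⟩ := extend_partialOrder (α := α) (· ≤ ·)
  classical
  have hmem : ∀ a, a ∈ Finset.univ.sort t := fun a => (Finset.mem_sort t).2 (Finset.mem_univ a)
  refine ⟨Finset.univ.sort t, Finset.sort_nodup _ _, hmem, fun a b hab => ?_⟩
  refine List.idxOf_lt_idxOf_of_pairwise (Finset.pairwise_sort _ _) (hmem a) (hmem b)
    (ne_of_irrefl hab) fun hba => ?_
  exact ne_of_irrefl hab (antisymm (hle a b (Or.inr hab)) hba)

theorem stmt2_general {V : Type*} [Fintype V] [DecidableEq V]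
    (D : V → Finset (Finset V)) :
    (∃ L : List V, L.Nodup ∧ (∀ v, v ∈ L) ∧
        ∀ v, ∃ S ∈ D v, ∀ u ∈ S, L.idxOf u < L.idxOf v) ↔
      (∃ f : V → Finset V, (∀ v, f v ∈ D v) ∧
        ¬ ∃ v, Relation.TransGen (fun u w => u ∈ f w) v v) := by
  constructor
  · rintro ⟨L, -, -, hL⟩
    choose f hfD hf using hL
    exact ⟨f, hfD, fun ⟨v, hv⟩ => lt_irrefl _ (hv.lt_of_forall_rel_lt fun u w h => hf w u h)⟩
  · rintro ⟨f, hfD, hacyc⟩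
    have : IsStrictOrder V (Relation.TransGen fun u w => u ∈ f w) :=
      { irrefl := fun v hv => hacyc ⟨v, hv⟩ }
    obtain ⟨L, hnd, hmem, hL⟩ :=
      exists_list_idxOf_lt_of_isStrictOrder (Relation.TransGen fun u w => u ∈ f w)
    exact ⟨L, hnd, hmem, fun v => ⟨f v, hfD v, fun u hu => hL u v (.single hu)⟩⟩

/-- The greedy ordering procedure can terminate with a complete ordering of `V`
(i.e. there is an ordering in which every vertex has some allowed parent set
contained in the preceding vertices) iff there is a choice `f v ∈ D v` of a
parent set for each vertex whose induced directed graph is acyclic. -/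
theorem stmt2 {V : Type*} [Fintype V] [DecidableEq V]
    (D : V → Finset (Finset V)) (hD : ∀ v, (D v).Nonempty)
    (hself : ∀ v, ∀ S ∈ D v, v ∉ S) :
    (∃ L : List V, L.Nodup ∧ (∀ v, v ∈ L) ∧
        ∀ v, ∃ S ∈ D v, ∀ u ∈ S, L.idxOf u < L.idxOf v) ↔
      (∃ f : V → Finset V, (∀ v, f v ∈ D v) ∧
        ¬ ∃ v, Relation.TransGen (fun u w => u ∈ f w) v v) :=
  stmt2_general D
end

section
/- If the greedy acyclicity checker halts with an incomplete order, then the set C of unordered vertices is nonempty and every parent set S ∈ D(v) of every v ∈ C intersects C; consequently no acyclic assignment of parent sets exists. -/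
/-! If every vertex outside the order had a parent set avoiding the unordered set `C`, the
checker could have ordered it; so each `v ∈ C` has, under any assignment `f`, a parent `u ∈ C`.
In an acyclic assignment the ancestor relation is a strict order on a finite set, hence
well-founded, and a minimal element of `C` would have no such parent. -/

theorem Relation.exists_transGen_self_of_forall_exists_rel {α : Type*} [Finite α]
    {r : α → α → Prop} {s : Set α} (hs : s.Nonempty) (h : ∀ x ∈ s, ∃ y ∈ s, r y x) :
    ∃ x, Relation.TransGen r x x := by
  by_contra! hacyc
  have : Std.Irrefl (Relation.TransGen r) := ⟨hacyc⟩
  obtain ⟨m, hm, hmin⟩ :=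
    (Finite.wellFounded_of_trans_of_irrefl (Relation.TransGen r)).has_min s hs
  obtain ⟨y, hy, hym⟩ := h m hm
  exact hmin y hy (.single hym)

theorem stmt3_general {V : Type*} [Fintype V] [DecidableEq V]
    (D : V → Finset (Finset V)) (L : List V)
    (hstuck : ∀ v, v ∉ L → ∀ S ∈ D v, ∃ u ∈ S, u ∉ L)
    (hincomplete : ∃ v : V, v ∉ L) :
    (Finset.univ.filter (fun v : V => v ∉ L)).Nonempty ∧
    (∀ v ∈ Finset.univ.filter (fun v : V => v ∉ L), ∀ S ∈ D v,
        ∃ u ∈ S, u ∈ Finset.univ.filter (fun v : V => v ∉ L)) ∧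
    ¬ ∃ f : V → Finset V, (∀ v, f v ∈ D v) ∧
        ¬ ∃ v, Relation.TransGen (fun u w => u ∈ f w) v v := by
  simp only [Finset.filter_nonempty_iff, Finset.mem_univ, true_and, Finset.mem_filter]
  refine ⟨hincomplete, hstuck, ?_⟩
  rintro ⟨f, hfD, hacyc⟩
  exact hacyc <| Relation.exists_transGen_self_of_forall_exists_rel (s := {v | v ∉ L})
    hincomplete fun v hv =>
      (hstuck v hv (f v) (hfD v)).imp fun _ ⟨hu, hC⟩ => ⟨hC, hu⟩

/-- If the greedy acyclicity checker halts with an incomplete order `L`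
(no unordered vertex has a parent set contained in the ordered vertices), then
the set `C` of unordered vertices is nonempty, every parent set of every vertex
of `C` intersects `C`, and consequently no acyclic assignment of parent sets
exists. -/
theorem stmt3 {V : Type*} [Fintype V] [DecidableEq V]
    (D : V → Finset (Finset V)) (L : List V) (hnd : L.Nodup)
    (hstuck : ∀ v, v ∉ L → ∀ S ∈ D v, ∃ u ∈ S, u ∉ L)
    (hincomplete : ∃ v : V, v ∉ L) :
    (Finset.univ.filter (fun v : V => v ∉ L)).Nonempty ∧
    (∀ v ∈ Finset.univ.filter (fun v : V => v ∉ L), ∀ S ∈ D v,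
        ∃ u ∈ S, u ∈ Finset.univ.filter (fun v : V => v ∉ L)) ∧
    ¬ ∃ f : V → Finset V, (∀ v, f v ∈ D v) ∧
        ¬ ∃ v, Relation.TransGen (fun u w => u ∈ f w) v v :=
  stmt3_general D L hstuck hincomplete
end

section
/- Let P be the primal LP min{c^T x : Ax ≥ b, x ≥ 0} with dual D, and let ŷ be feasible for D with objective value o. If Σ_{i∈I} x_i ≥ 1 is a valid inequality for an optimization problem refined by P, and min_{i∈I} (c_i − (A^T ŷ)_i) = r > 0, then the optimal value of the LP obtained from P by adding this inequality is at least o + r. -/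
/-!
Split `c ⬝ᵥ x = (Aᵀ ŷ) ⬝ᵥ x + (c - Aᵀ ŷ) ⬝ᵥ x`. The first term is at least `b ⬝ᵥ ŷ = o`, as in
weak duality. The second is the reduced-cost vector paired with `x`: all its entries are
nonnegative and those indexed by `I` are at least `r`, so it is at least `r * ∑ i ∈ I, x i ≥ r`.
-/

open Matrix Finset

section

variable {m n R : Type*} [Fintype m] [Fintype n] [CommRing R] [PartialOrder R] [IsOrderedRing R]

theorem dotProduct_le_transpose_mulVec_dotProduct (A : Matrix m n R) {b y : m → R} {x : n → R}
    (hy : 0 ≤ y) (hb : b ≤ A *ᵥ x) : b ⬝ᵥ y ≤ Aᵀ *ᵥ y ⬝ᵥ x :=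
  calc b ⬝ᵥ y = y ⬝ᵥ b := dotProduct_comm b y
    _ ≤ y ⬝ᵥ A *ᵥ x := dotProduct_le_dotProduct_of_nonneg_left hb hy
    _ = Aᵀ *ᵥ y ⬝ᵥ x := by rw [dotProduct_mulVec, mulVec_transpose]

theorem mul_sum_le_dotProduct {d x : n → R} {I : Finset n} {r : R}
    (hd : 0 ≤ d) (hx : 0 ≤ x) (hr : ∀ i ∈ I, r ≤ d i) : r * ∑ i ∈ I, x i ≤ d ⬝ᵥ x :=
  calc r * ∑ i ∈ I, x i = ∑ i ∈ I, r * x i := mul_sum I x r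
    _ ≤ ∑ i ∈ I, d i * x i := sum_le_sum fun i hi => mul_le_mul_of_nonneg_right (hr i hi) (hx i)
    _ ≤ d ⬝ᵥ x := sum_le_univ_sum_of_nonneg fun i => mul_nonneg (hd i) (hx i)

end

theorem stmt5_general {m n : Type*} [Fintype m] [Fintype n]
    (A : Matrix m n ℝ) (b : m → ℝ) (c : n → ℝ) (yhat : m → ℝ) (o : ℝ)
    (hy0 : ∀ j, 0 ≤ yhat j)
    (hyfeas : ∀ i, A.transpose.mulVec yhat i ≤ c i)
    (ho : o = dotProduct b yhat)
    (I : Finset n) (r : ℝ) (hr : 0 < r)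
    (hrc : ∀ i ∈ I, r ≤ c i - A.transpose.mulVec yhat i) :
    ∀ x : n → ℝ, (∀ i, 0 ≤ x i) → (∀ j, b j ≤ A.mulVec x j) →
      1 ≤ ∑ i ∈ I, x i → o + r ≤ dotProduct c x := by
  intro x hx0 hAx hI
  have hdual : b ⬝ᵥ yhat ≤ Aᵀ *ᵥ yhat ⬝ᵥ x :=
    dotProduct_le_transpose_mulVec_dotProduct A hy0 hAx
  have hreduced : r ≤ (c - Aᵀ *ᵥ yhat) ⬝ᵥ x :=
    (le_mul_of_one_le_right hr.le hI).trans
      (mul_sum_le_dotProduct (fun i => sub_nonneg.2 (hyfeas i)) hx0 hrc)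
  calc o + r ≤ Aᵀ *ᵥ yhat ⬝ᵥ x + (c - Aᵀ *ᵥ yhat) ⬝ᵥ x := ho ▸ add_le_add hdual hreduced
    _ = c ⬝ᵥ x := by rw [sub_dotProduct, add_sub_cancel]

/-- Adding a valid covering inequality `∑_{i ∈ I} x_i ≥ 1` whose variables all
have reduced cost at least `r > 0` (with the minimum attained) under a feasible
dual solution of objective value `o` raises the optimum of the augmented primal
LP to at least `o + r`. -/
theorem stmt5 {m n : Type*} [Fintype m] [Fintype n]
    (A : Matrix m n ℝ) (b : m → ℝ) (c : n → ℝ) (yhat : m → ℝ) (o : ℝ)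
    (hy0 : ∀ j, 0 ≤ yhat j)
    (hyfeas : ∀ i, A.transpose.mulVec yhat i ≤ c i)
    (ho : o = dotProduct b yhat)
    (I : Finset n) (r : ℝ) (hr : 0 < r)
    (hrc : ∀ i ∈ I, r ≤ c i - A.transpose.mulVec yhat i)
    (hattain : ∃ i ∈ I, c i - A.transpose.mulVec yhat i = r) :
    ∀ x : n → ℝ, (∀ i, 0 ≤ x i) → (∀ j, b j ≤ A.mulVec x j) →
      1 ≤ ∑ i ∈ I, x i → o + r ≤ dotProduct c x :=
  stmt5_general A b c yhat o hy0 hyfeas ho I r hr hrc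
end

section
/- Every minimal (with respect to set inclusion) nonempty subset C ⊆ V that admits no acyclic assignment of parent sets from domains D is itself a violated cluster, i.e., every parent set of every vertex in C intersects C. -/
/- If some `v ∈ C` had a parent set disjoint from `C`, then putting `v` in front of an acyclic
ordering of the proper subset `C.erase v` would give an acyclic ordering of `C`. -/

/-- `C` admits an acyclic assignment: there is an ordering of `C` such that each
vertex has some parent set whose intersection with `C` appears earlier. -/
def AdmitsAcyclic {V : Type*} [DecidableEq V]
    (D : V → Finset (Finset V)) (C : Finset V) : Prop :=
  ∃ L : List V, L.Nodup ∧ (∀ v, v ∈ L ↔ v ∈ C) ∧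
    ∀ v ∈ L, ∃ S ∈ D v, ∀ u ∈ S, u ∈ C → L.idxOf u < L.idxOf v

namespace AdmitsAcyclic

variable {V : Type*} [DecidableEq V] {D : V → Finset (Finset V)}

theorem empty : AdmitsAcyclic D ∅ :=
  ⟨[], List.nodup_nil, by simp, by simp⟩

theorem insert_of_disjoint {C : Finset V} {v : V} {S : Finset V} (hC : AdmitsAcyclic D C)
    (hv : v ∉ C) (hS : S ∈ D v) (hdisj : Disjoint S (insert v C)) :
    AdmitsAcyclic D (insert v C) := by
  obtain ⟨L, hnd, hmem, hord⟩ := hC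
  have hvL : v ∉ L := fun h => hv ((hmem v).mp h)
  refine ⟨v :: L, List.nodup_cons.mpr ⟨hvL, hnd⟩, by simp [hmem], ?_⟩
  intro w hw
  rcases List.mem_cons.mp hw with rfl | hwL
  · exact ⟨S, hS, fun u hu huC => absurd huC (Finset.disjoint_left.mp hdisj hu)⟩
  · obtain ⟨T, hT, hTord⟩ := hord w hwL
    have hwv : v ≠ w := fun h => hvL (h ▸ hwL)
    refine ⟨T, hT, fun u hu huC => ?_⟩
    rw [List.idxOf_cons_ne _ hwv]
    rcases Finset.mem_insert.mp huC with rfl | huC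
    · simp
    · have huv : u ≠ v := fun h => hv (h ▸ huC)
      rw [List.idxOf_cons_ne _ huv.symm]
      exact Nat.succ_lt_succ (hTord u hu huC)

end AdmitsAcyclic

theorem stmt9_general {V : Type*} [DecidableEq V]
    (D : V → Finset (Finset V)) (C : Finset V)
    (hunsat : ¬ AdmitsAcyclic D C)
    (hmin : ∀ C' ⊂ C, C'.Nonempty → AdmitsAcyclic D C') :
    ∀ v ∈ C, ∀ S ∈ D v, ∃ u ∈ S, u ∈ C := by
  intro v hv S hS
  by_contra! hdisj
  have hrest : AdmitsAcyclic D (C.erase v) := by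
    rcases (C.erase v).eq_empty_or_nonempty with he | hne
    · exact he ▸ AdmitsAcyclic.empty
    · exact hmin _ (Finset.erase_ssubset hv) hne
  apply hunsat
  rw [← Finset.insert_erase hv]
  refine hrest.insert_of_disjoint (Finset.notMem_erase v C) hS ?_
  rw [Finset.insert_erase hv]
  exact Finset.disjoint_left.mpr hdisj

/-- Every minimal nonempty subset `C` admitting no acyclic assignment is a
violated cluster: every parent set of every vertex of `C` intersects `C`. -/
theorem stmt9 {V : Type*} [Fintype V] [DecidableEq V]
    (D : V → Finset (Finset V)) (C : Finset V) (hne : C.Nonempty)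
    (hunsat : ¬ AdmitsAcyclic D C)
    (hmin : ∀ C' ⊂ C, C'.Nonempty → AdmitsAcyclic D C') :
    ∀ v ∈ C, ∀ S ∈ D v, ∃ u ∈ S, u ∈ C :=
  stmt9_general D C hunsat hmin
end

section
/- Merging two valid orders: let O and Q be two orderings of V, each such that every vertex v has some parent set in D(v) contained in the vertices preceding it in that order. Fix v with S ∈ D(v) contained in the prefix of Q before v. Let O' be the sequence formed by the prefix of O before v, followed by the prefix of Q before v, followed by v, followed by the suffix of O after v, with duplicates removed keeping first occurrences. Then O' is again an ordering of V in which every vertex has some parent set in D(v) among its predecessors, and in O' the set S is contained in the predecessors of v. -/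
/-- Remove duplicates from a list keeping the *first* occurrence of each
element. -/
def dedupFirst {V : Type*} [DecidableEq V] (l : List V) : List V :=
  l.reverse.dedup.reverse

/-- A list `L` is a valid ordering for domains `D`: every vertex has some
parent set contained in its predecessors in `L`. -/
def ValidOrder {V : Type*} [Fintype V] [DecidableEq V]
    (D : V → Finset (Finset V)) (L : List V) : Prop :=
  L.Nodup ∧ (∀ v, v ∈ L) ∧
    ∀ w, ∃ T ∈ D w, ∀ u ∈ T, L.idxOf u < L.idxOf w

/-!
Removing duplicates while keeping first occurrences does not change which of two elements
occurs first, so it suffices to study the merged list `A ++ B ++ v :: C` itself, where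
`O = A ++ v :: C` and `B` is the prefix of `Q` before `v`. For every `w`, the elements before
the first occurrence of `w` in the merged list include all predecessors of `w` in `Q` when `w`
first occurs in `B`, and all predecessors of `w` in `O` otherwise; so the parent set that
witnesses `w` in `O` or in `Q` still does. For `v` they include all of `B`, hence `S`.
-/

namespace List

variable {α : Type*} [DecidableEq α]

theorem mem_takeWhile_ne_iff_idxOf_lt {l : List α} {u w : α} :
    u ∈ l.takeWhile (· ≠ w) ↔ l.idxOf u < l.idxOf w := by
  induction l with
  | nil => simp
  | cons a l ih =>
    by_cases haw : a = w
    · subst haw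
      simp
    · by_cases hua : u = a
      · subst hua
        simp [haw, idxOf_cons_ne]
      · rw [takeWhile_cons_of_pos (by simpa using haw), mem_cons, idxOf_cons_ne _ haw,
          idxOf_cons_ne _ (Ne.symm hua), ih, Nat.succ_lt_succ_iff]
        simp only [hua, false_or]

theorem idxOf_lt_of_takeWhile_ne_subset {l₁ l₂ : List α} {u w : α}
    (hsub : l₁.takeWhile (· ≠ w) ⊆ l₂.takeWhile (· ≠ w)) (h : l₁.idxOf u < l₁.idxOf w) :
    l₂.idxOf u < l₂.idxOf w :=
  mem_takeWhile_ne_iff_idxOf_lt.1 (hsub (mem_takeWhile_ne_iff_idxOf_lt.2 h))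

theorem takeWhile_ne_append_of_mem {l₁ l₂ : List α} {w : α} (hw : w ∈ l₁) :
    (l₁ ++ l₂).takeWhile (· ≠ w) = l₁.takeWhile (· ≠ w) := by
  induction l₁ with
  | nil => cases hw
  | cons a l ih =>
    by_cases haw : a = w
    · simp [haw]
    · rw [cons_append, takeWhile_cons_of_pos (by simpa using haw),
        takeWhile_cons_of_pos (by simpa using haw),
        ih ((mem_cons.1 hw).resolve_left (Ne.symm haw))]

theorem takeWhile_ne_eq_self {l : List α} {w : α} (hw : w ∉ l) : l.takeWhile (· ≠ w) = l :=
  takeWhile_eq_self_iff.2 fun _ ha => by simpa using ne_of_mem_of_not_mem ha hw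

theorem takeWhile_ne_append_of_notMem {l₁ l₂ : List α} {w : α} (hw : w ∉ l₁) :
    (l₁ ++ l₂).takeWhile (· ≠ w) = l₁ ++ l₂.takeWhile (· ≠ w) :=
  takeWhile_append_of_pos fun _ ha => by simpa using ne_of_mem_of_not_mem ha hw

theorem takeWhile_ne_append_cons_tail_dropWhile {l : List α} {v : α} (hv : v ∈ l) :
    l.takeWhile (· ≠ v) ++ v :: (l.dropWhile (· ≠ v)).tail = l := by
  have hne : l.dropWhile (· ≠ v) ≠ [] := by simpa [dropWhile_eq_nil_iff] using hv
  conv_rhs => rw [← takeWhile_append_dropWhile (p := (· ≠ v)) (l := l), ← cons_head_tail hne]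
  congr 2
  have hhead := head_dropWhile_not (· ≠ v) hne
  rw [decide_eq_false_iff_not, not_not] at hhead
  exact hhead.symm

end List

open List

section dedupFirst

variable {α : Type*} [DecidableEq α]

theorem mem_dedupFirst {l : List α} {u : α} : u ∈ dedupFirst l ↔ u ∈ l := by
  simp [dedupFirst]

theorem nodup_dedupFirst (l : List α) : (dedupFirst l).Nodup :=
  nodup_reverse.2 (nodup_dedup _)

theorem dedupFirst_append_singleton (l : List α) (a : α) :
    dedupFirst (l ++ [a]) = if a ∈ l then dedupFirst l else dedupFirst l ++ [a] := by
  by_cases h : a ∈ l <;> simp [dedupFirst, h, dedup_cons_of_mem, dedup_cons_of_notMem]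

theorem takeWhile_ne_dedupFirst (l : List α) (w : α) :
    (dedupFirst l).takeWhile (· ≠ w) = dedupFirst (l.takeWhile (· ≠ w)) := by
  induction l using reverseRecOn with
  | nil => rfl
  | append_singleton l a ih =>
    by_cases hw : w ∈ l
    · rw [takeWhile_ne_append_of_mem hw, ← ih, dedupFirst_append_singleton]
      split_ifs
      · rfl
      · exact takeWhile_ne_append_of_mem (mem_dedupFirst.2 hw)
    · have hwD : w ∉ dedupFirst l := mt mem_dedupFirst.1 hw
      by_cases haw : a = w
      · subst haw
        rw [dedupFirst_append_singleton, if_neg hw, takeWhile_ne_append_of_notMem hw,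
          takeWhile_ne_append_of_notMem hwD]
        simp
      · have hwa : w ∉ l ++ [a] := by simp [hw, Ne.symm haw]
        rw [takeWhile_ne_eq_self hwa, takeWhile_ne_eq_self (mt mem_dedupFirst.1 hwa)]

theorem idxOf_dedupFirst_lt_iff {l : List α} {u w : α} :
    (dedupFirst l).idxOf u < (dedupFirst l).idxOf w ↔ l.idxOf u < l.idxOf w := by
  rw [← mem_takeWhile_ne_iff_idxOf_lt, ← mem_takeWhile_ne_iff_idxOf_lt, takeWhile_ne_dedupFirst,
    mem_dedupFirst]

end dedupFirst

section merge

variable {α : Type*} [DecidableEq α]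

def mergeAt (O Q : List α) (v : α) : List α :=
  O.takeWhile (· ≠ v) ++ Q.takeWhile (· ≠ v) ++ v :: (O.dropWhile (· ≠ v)).tail

variable (O Q : List α) {v : α}

theorem subset_mergeAt (hv : v ∈ O) : O ⊆ mergeAt O Q v := by
  conv_lhs => rw [← takeWhile_ne_append_cons_tail_dropWhile hv]
  intro x
  simp only [mergeAt, mem_append, mem_cons]
  tauto

theorem takeWhile_ne_mergeAt_self :
    (mergeAt O Q v).takeWhile (· ≠ v) = O.takeWhile (· ≠ v) ++ Q.takeWhile (· ≠ v) := by
  have hv : v ∉ O.takeWhile (· ≠ v) ++ Q.takeWhile (· ≠ v) := fun h => by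
    rcases mem_append.1 h with h | h <;> simpa using mem_takeWhile_imp h
  rw [mergeAt, takeWhile_ne_append_of_notMem hv, takeWhile_cons_of_neg (by simp), append_nil]

theorem takeWhile_ne_subset_mergeAt (hv : v ∈ O) (w : α) :
    O.takeWhile (· ≠ w) ⊆ (mergeAt O Q v).takeWhile (· ≠ w) ∨
      Q.takeWhile (· ≠ w) ⊆ (mergeAt O Q v).takeWhile (· ≠ w) := by
  set A := O.takeWhile (· ≠ v)
  set B := Q.takeWhile (· ≠ v)
  set C := (O.dropWhile (· ≠ v)).tail
  have hO : O = A ++ v :: C := (takeWhile_ne_append_cons_tail_dropWhile hv).symm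
  have hmerge : mergeAt O Q v = A ++ (B ++ v :: C) := append_assoc _ _ _
  by_cases hwA : w ∈ A
  · left
    rw [hmerge, takeWhile_ne_append_of_mem hwA, hO, takeWhile_ne_append_of_mem hwA]
    exact Subset.refl _
  rw [hmerge, takeWhile_ne_append_of_notMem hwA]
  by_cases hwB : w ∈ B
  · right
    conv_lhs => rw [← takeWhile_append_dropWhile (p := (· ≠ v)) (l := Q)]
    rw [takeWhile_ne_append_of_mem hwB, takeWhile_ne_append_of_mem hwB]
    exact subset_append_right _ _
  · left
    rw [hO, takeWhile_ne_append_of_notMem hwA, takeWhile_ne_append_of_notMem hwB]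
    exact ((sublist_append_right B _).append_left A).subset

end merge

theorem validOrder_dedupFirst {V : Type*} [Fintype V] [DecidableEq V]
    {D : V → Finset (Finset V)} {L : List V} (hmem : ∀ v, v ∈ L)
    (hpar : ∀ w, ∃ T ∈ D w, ∀ u ∈ T, L.idxOf u < L.idxOf w) :
    ValidOrder D (dedupFirst L) := by
  refine ⟨nodup_dedupFirst L, fun v => mem_dedupFirst.2 (hmem v), fun w => ?_⟩
  obtain ⟨T, hT, hlt⟩ := hpar w
  exact ⟨T, hT, fun u hu => idxOf_dedupFirst_lt_iff.2 (hlt u hu)⟩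

theorem stmt10_general {V : Type*} [Fintype V] [DecidableEq V]
    (D : V → Finset (Finset V)) (O Q : List V)
    (hO : ValidOrder D O) (hQ : ValidOrder D Q)
    (v : V) (S : Finset V)
    (hSQ : ∀ u ∈ S, Q.idxOf u < Q.idxOf v) :
    ValidOrder D (dedupFirst (O.takeWhile (fun w => decide (w ≠ v)) ++
        Q.takeWhile (fun w => decide (w ≠ v)) ++
        v :: (O.dropWhile (fun w => decide (w ≠ v))).tail)) ∧
    ∀ u ∈ S,
      (dedupFirst (O.takeWhile (fun w => decide (w ≠ v)) ++
        Q.takeWhile (fun w => decide (w ≠ v)) ++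
        v :: (O.dropWhile (fun w => decide (w ≠ v))).tail)).idxOf u <
      (dedupFirst (O.takeWhile (fun w => decide (w ≠ v)) ++
        Q.takeWhile (fun w => decide (w ≠ v)) ++
        v :: (O.dropWhile (fun w => decide (w ≠ v))).tail)).idxOf v := by
  change ValidOrder D (dedupFirst (mergeAt O Q v)) ∧
    ∀ u ∈ S, (dedupFirst (mergeAt O Q v)).idxOf u < (dedupFirst (mergeAt O Q v)).idxOf v
  have hvO : v ∈ O := hO.2.1 v
  have hpar (w : V) :
      ∃ T ∈ D w, ∀ u ∈ T, (mergeAt O Q v).idxOf u < (mergeAt O Q v).idxOf w := by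
    rcases takeWhile_ne_subset_mergeAt O Q hvO w with hsub | hsub
    · obtain ⟨T, hT, hlt⟩ := hO.2.2 w
      exact ⟨T, hT, fun u hu => idxOf_lt_of_takeWhile_ne_subset hsub (hlt u hu)⟩
    · obtain ⟨T, hT, hlt⟩ := hQ.2.2 w
      exact ⟨T, hT, fun u hu => idxOf_lt_of_takeWhile_ne_subset hsub (hlt u hu)⟩
  have hQv : Q.takeWhile (· ≠ v) ⊆ (mergeAt O Q v).takeWhile (· ≠ v) := by
    rw [takeWhile_ne_mergeAt_self]
    exact subset_append_right _ _
  exact ⟨validOrder_dedupFirst (fun x => subset_mergeAt O Q hvO (hO.2.1 x)) hpar,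
    fun u hu => idxOf_dedupFirst_lt_iff.2 (idxOf_lt_of_takeWhile_ne_subset hQv (hSQ u hu))⟩

/-- Merging two valid orders: the prefix of `O` before `v`, followed by the
prefix of `Q` before `v`, then `v`, then the suffix of `O` after `v`, with
duplicates removed keeping first occurrences, is again a valid order, and it
supports the value `S ∈ D v` supported by `Q`. -/
theorem stmt10 {V : Type*} [Fintype V] [DecidableEq V]
    (D : V → Finset (Finset V)) (O Q : List V)
    (hO : ValidOrder D O) (hQ : ValidOrder D Q)
    (v : V) (S : Finset V) (hS : S ∈ D v)
    (hSQ : ∀ u ∈ S, Q.idxOf u < Q.idxOf v) :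
    ValidOrder D (dedupFirst (O.takeWhile (fun w => decide (w ≠ v)) ++
        Q.takeWhile (fun w => decide (w ≠ v)) ++
        v :: (O.dropWhile (fun w => decide (w ≠ v))).tail)) ∧
    ∀ u ∈ S,
      (dedupFirst (O.takeWhile (fun w => decide (w ≠ v)) ++
        Q.takeWhile (fun w => decide (w ≠ v)) ++
        v :: (O.dropWhile (fun w => decide (w ≠ v))).tail)).idxOf u <
      (dedupFirst (O.takeWhile (fun w => decide (w ≠ v)) ++
        Q.takeWhile (fun w => decide (w ≠ v)) ++
        v :: (O.dropWhile (fun w => decide (w ≠ v))).tail)).idxOf v :=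
  stmt10_general D O Q hO hQ v S hSQ
end

section
/- Correctness of the GAC propagator for acyclicity: given domains D admitting at least one acyclic assignment, a value S ∈ D(v) is part of some acyclic assignment (i.e., there is a choice f with f(v) = S and f(w) ∈ D(w) for all w whose induced parent graph is acyclic) if and only if there exists a valid ordering of V in which all elements of S precede v. -/
/-!
An acyclic assignment `f` with `f v = S` is well founded on the finite set `V`, so repeatedly
removing a minimal vertex lists `V` in a topological order of its parent graph; in that order
every `f w` precedes `w`, which makes it a valid ordering in which `S` precedes `v`.
Conversely, given a valid ordering, pick for each `w` a domain value preceding `w`, and `S`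
for `v`: every edge of the induced graph increases the position, so there is no cycle.
-/

open Relation

lemma Relation.TransGen.lt_of_lt_on {α β : Type*} [Preorder β] {r : α → α → Prop} (g : α → β)
    (h : ∀ a b, r a b → g a < g b) {a b : α} (hab : TransGen r a b) : g a < g b := by
  simpa only [transGen_eq_self] using hab.lift g h

lemma Relation.wellFounded_of_not_transGen_self {α : Type*} [Finite α] {r : α → α → Prop}
    (h : ¬∃ z, TransGen r z z) : WellFounded r :=
  haveI : Std.Irrefl (TransGen r) := ⟨fun z hz => h ⟨z, hz⟩⟩
  Subrelation.wf TransGen.single (Finite.wellFounded_of_trans_of_irrefl (TransGen r))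

lemma WellFounded.exists_nodup_list_idxOf_lt {α : Type*} [DecidableEq α] {r : α → α → Prop}
    (wf : WellFounded r) (s : Finset α) :
    ∃ L : List α, L.Nodup ∧ (∀ w, w ∈ L ↔ w ∈ s) ∧
      ∀ u w, r u w → u ∈ s → w ∈ s → L.idxOf u < L.idxOf w := by
  induction s using Finset.strongInduction with
  | H s ih =>
  rcases s.eq_empty_or_nonempty with rfl | hne
  · exact ⟨[], List.nodup_nil, by simp, by simp⟩
  obtain ⟨m, hm : m ∈ s, hmin⟩ := wf.has_min s hne
  obtain ⟨L, hnd, hmem, hlt⟩ := ih (s.erase m) (Finset.erase_ssubset hm)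
  refine ⟨m :: L, List.nodup_cons.mpr ⟨by simp [hmem], hnd⟩, ?_, ?_⟩
  · intro w
    by_cases hw : w = m <;> simp [hw, hmem, hm]
  · intro u w hr hu hw
    have hwm : w ≠ m := by
      rintro rfl
      exact hmin u hu hr
    rw [List.idxOf_cons_ne _ (Ne.symm hwm)]
    by_cases hum : u = m
    · simp [hum]
    · rw [List.idxOf_cons_ne _ (Ne.symm hum)]
      have := hlt u w hr (Finset.mem_erase.mpr ⟨hum, hu⟩) (Finset.mem_erase.mpr ⟨hwm, hw⟩)
      omega

theorem stmt11_general {V : Type*} [Fintype V] [DecidableEq V]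
    (D : V → Finset (Finset V))
    (v : V) (S : Finset V) (hS : S ∈ D v) :
    (∃ f : V → Finset V, (∀ w, f w ∈ D w) ∧ f v = S ∧
        ¬ ∃ z, Relation.TransGen (fun u w => u ∈ f w) z z) ↔
      (∃ L : List V, L.Nodup ∧ (∀ w, w ∈ L) ∧
        (∀ w, ∃ T ∈ D w, ∀ u ∈ T, L.idxOf u < L.idxOf w) ∧
        ∀ u ∈ S, L.idxOf u < L.idxOf v) := by
  constructor
  · rintro ⟨f, hfD, rfl, hacyc⟩
    obtain ⟨L, hnd, hmem, hlt⟩ :=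
      (wellFounded_of_not_transGen_self hacyc).exists_nodup_list_idxOf_lt Finset.univ
    have hord : ∀ w, ∀ u ∈ f w, L.idxOf u < L.idxOf w := fun w u hu =>
      hlt u w hu (Finset.mem_univ u) (Finset.mem_univ w)
    exact ⟨L, hnd, fun w => (hmem w).mpr (Finset.mem_univ w), fun w => ⟨f w, hfD w, hord w⟩,
      hord v⟩
  · rintro ⟨L, -, -, hT, hSv⟩
    choose T hTD hTlt using hT
    refine ⟨Function.update T v S, fun w => ?_, Function.update_self v S T, ?_⟩
    · by_cases hw : w = v
      · subst hw; simpa using hS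
      · simpa [hw] using hTD w
    · rintro ⟨z, hz⟩
      refine lt_irrefl _ (hz.lt_of_lt_on L.idxOf fun u w huw => ?_)
      by_cases hw : w = v
      · subst hw; exact hSv u (by simpa using huw)
      · exact hTlt w u (by simpa [hw] using huw)

/-- GAC propagator correctness: assuming some acyclic assignment exists, a value
`S ∈ D v` participates in some acyclic assignment iff there is a valid ordering
of `V` in which all elements of `S` precede `v`. -/
theorem stmt11 {V : Type*} [Fintype V] [DecidableEq V]
    (D : V → Finset (Finset V))
    (hex : ∃ f : V → Finset V, (∀ w, f w ∈ D w) ∧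
        ¬ ∃ z, Relation.TransGen (fun u w => u ∈ f w) z z)
    (v : V) (S : Finset V) (hS : S ∈ D v) :
    (∃ f : V → Finset V, (∀ w, f w ∈ D w) ∧ f v = S ∧
        ¬ ∃ z, Relation.TransGen (fun u w => u ∈ f w) z z) ↔
      (∃ L : List V, L.Nodup ∧ (∀ w, w ∈ L) ∧
        (∀ w, ∃ T ∈ D w, ∀ u ∈ T, L.idxOf u < L.idxOf w) ∧
        ∀ u ∈ S, L.idxOf u < L.idxOf v) :=
  stmt11_general D v S hS
end

section
/- The greedy prefix-extension in the GAC propagator computes the maximal deferral of v: starting from the prefix of a valid order O before v, greedily adding any vertex w ≠ v with some parent set in D(w) contained in the current prefix yields a set P such that S ∈ D(v) is supported by some valid ordering if and only if S ⊆ P. -/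
/-!
Call `Q` closed if it contains every `w ≠ v` having a parent set `T ∈ D w` with `T ⊆ Q`. In a
valid ordering every vertex has a parent set of smaller position, so by strong induction on the
position everything before `v` lies in every closed set, in particular in `P`. Conversely, the
prefix of `O` is derivable without `v`, so the least closed set `P` lies in the union of the
greedy stages. Listing that union by stage and then all other vertices, `v` included, by their
position in `O` gives a valid ordering in which all of `P` precedes `v`.
-/

open Finset

theorem List.Pairwise.idxOf_lt_of_not_rel {α : Type*} [DecidableEq α] {R : α → α → Prop}
    {l : List α} (hl : l.Pairwise R) {a b : α} (ha : a ∈ l) (hb : b ∈ l) (hab : a ≠ b)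
    (hba : ¬ R b a) : l.idxOf a < l.idxOf b := by
  have hia := List.idxOf_lt_length_iff.2 ha
  have hib := List.idxOf_lt_length_iff.2 hb
  rcases lt_trichotomy (l.idxOf a) (l.idxOf b) with h | h | h
  · exact h
  · exact absurd ((List.idxOf_inj ha).1 h) hab
  · have := List.pairwise_iff_getElem.1 hl _ _ hib hia h
    rw [List.getElem_idxOf, List.getElem_idxOf] at this
    exact absurd this hba

theorem exists_list_idxOf_lt_of_lt {α β : Type*} [Fintype α] [DecidableEq α]
    [LinearOrder β] (key : α → β) :
    ∃ L : List α, L.Nodup ∧ (∀ a, a ∈ L) ∧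
      ∀ a b, key a < key b → L.idxOf a < L.idxOf b := by
  let R : α → α → Prop := fun a b => key a ≤ key b
  have : Std.Total R := ⟨fun a b => le_total (key a) (key b)⟩
  have : IsTrans α R := ⟨fun _ _ _ => le_trans⟩
  have hperm := List.perm_insertionSort R (univ.toList : List α)
  have hmem (x : α) : x ∈ List.insertionSort R univ.toList :=
    hperm.mem_iff.2 (mem_toList.2 (mem_univ x))
  refine ⟨List.insertionSort R univ.toList, hperm.nodup_iff.2 (nodup_toList _), hmem,
    fun a b hab => ?_⟩
  exact (List.pairwise_insertionSort R _).idxOf_lt_of_not_rel (hmem a) (hmem b)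
    (fun h => hab.ne (congrArg key h)) hab.not_ge

section Greedy

variable {V : Type*} (D : V → Finset (Finset V)) (v : V)

def IsRanking (key : V → ℕ) : Prop :=
  ∀ w, ∃ T ∈ D w, ∀ u ∈ T, key u < key w

def IsGreedyClosed (Q : Set V) : Prop :=
  ∀ w, w ≠ v → (∃ T ∈ D w, ∀ u ∈ T, u ∈ Q) → w ∈ Q

def greedyStage : ℕ → Set V
  | 0 => ∅
  | n + 1 => {w | w ≠ v ∧ ∃ T ∈ D w, ∀ u ∈ T, u ∈ greedyStage n}

def greedyClosure : Set V :=
  ⋃ n, greedyStage D v n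

noncomputable def greedyRank (w : V) : ℕ :=
  sInf {n | w ∈ greedyStage D v n}

variable {D v}

theorem IsRanking.mem_of_lt {key : V → ℕ} (hkey : IsRanking D key) {Q : Set V}
    (hQ : IsGreedyClosed D v Q) {u : V} (hu : key u < key v) : u ∈ Q := by
  induction hn : key u using Nat.strong_induction_on generalizing u with
  | _ n ih =>
    subst hn
    obtain ⟨T, hT, hTlt⟩ := hkey u
    exact hQ u (by rintro rfl; exact hu.false)
      ⟨T, hT, fun x hx => ih _ (hTlt x hx) ((hTlt x hx).trans hu) rfl⟩

theorem greedyStage_mono : Monotone (greedyStage D v) := by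
  refine monotone_nat_of_le_succ fun n => ?_
  induction n with
  | zero => exact Set.empty_subset _
  | succ n ih =>
    rintro w ⟨hwv, T, hT, hTn⟩
    exact ⟨hwv, T, hT, fun u hu => ih (hTn u hu)⟩

theorem self_notMem_greedyClosure : v ∉ greedyClosure D v := by
  rintro hv
  obtain ⟨n, hn⟩ := Set.mem_iUnion.1 hv
  cases n with
  | zero => exact hn
  | succ n => exact hn.1 rfl

theorem mem_greedyStage_greedyRank {w : V} (hw : w ∈ greedyClosure D v) :
    w ∈ greedyStage D v (greedyRank D v w) :=
  Nat.sInf_mem (Set.mem_iUnion.1 hw)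

theorem isGreedyClosed_greedyClosure : IsGreedyClosed D v (greedyClosure D v) := by
  rintro w hwv ⟨T, hT, hTc⟩
  refine Set.mem_iUnion.2 ⟨T.sup (greedyRank D v) + 1, hwv, T, hT, fun u hu => ?_⟩
  exact greedyStage_mono (le_sup hu) (mem_greedyStage_greedyRank (hTc u hu))

theorem exists_greedyRank_lt {w : V} (hw : w ∈ greedyClosure D v) :
    ∃ T ∈ D w, ∀ u ∈ T,
      u ∈ greedyClosure D v ∧ greedyRank D v u < greedyRank D v w := by
  have hstage := mem_greedyStage_greedyRank hw
  cases hr : greedyRank D v w with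
  | zero => rw [hr] at hstage; exact hstage.elim
  | succ n =>
    rw [hr] at hstage
    obtain ⟨-, T, hT, hTn⟩ := hstage
    exact ⟨T, hT, fun u hu => ⟨Set.mem_iUnion.2 ⟨n, hTn u hu⟩,
      Nat.lt_succ_of_le (Nat.sInf_le (hTn u hu))⟩⟩

theorem IsRanking.exists_greedyClosure_lt [Fintype V] {key : V → ℕ} (hkey : IsRanking D key) :
    ∃ key' : V → ℕ, IsRanking D key' ∧ ∀ u ∈ greedyClosure D v, key' u < key' v := by
  classical
  let C := univ.sup (greedyRank D v) + 1
  let key' : V → ℕ := fun w => if w ∈ greedyClosure D v then greedyRank D v w else C + key w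
  have hbelow {u : V} (hu : u ∈ greedyClosure D v) (n : ℕ) : key' u < C + n := by
    simpa only [key', if_pos hu] using Nat.lt_add_right n (Nat.lt_succ_of_le (le_sup (mem_univ u)))
  refine ⟨key', fun w => ?_, fun u hu => by
    simpa only [key', if_neg self_notMem_greedyClosure] using hbelow hu (key v)⟩
  by_cases hw : w ∈ greedyClosure D v
  · obtain ⟨T, hT, hTlt⟩ := exists_greedyRank_lt hw
    refine ⟨T, hT, fun u hu => ?_⟩
    simp only [key', if_pos hw, if_pos (hTlt u hu).1, (hTlt u hu).2]
  · obtain ⟨T, hT, hTlt⟩ := hkey w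
    refine ⟨T, hT, fun u hu => ?_⟩
    by_cases hu' : u ∈ greedyClosure D v
    · simpa only [key', if_neg hw] using hbelow hu' (key w)
    · simpa only [key', if_neg hw, if_neg hu'] using Nat.add_lt_add_left (hTlt u hu) C

end Greedy

theorem stmt12_general {V : Type*} [Fintype V] [DecidableEq V]
    (D : V → Finset (Finset V)) (O : List V)
    (hOvalid : ∀ w, ∃ T ∈ D w, ∀ u ∈ T, O.idxOf u < O.idxOf w)
    (v : V) (P : Finset V)
    (hPclosed : ∀ w, w ≠ v → (∃ T ∈ D w, ∀ u ∈ T, u ∈ P) → w ∈ P)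
    (hPleast : ∀ Q : Finset V,
      (∀ u, O.idxOf u < O.idxOf v → u ∈ Q) →
      (∀ w, w ≠ v → (∃ T ∈ D w, ∀ u ∈ T, u ∈ Q) → w ∈ Q) → P ⊆ Q) :
    ∀ S ∈ D v,
      ((∃ L : List V, L.Nodup ∧ (∀ w, w ∈ L) ∧
          (∀ w, ∃ T ∈ D w, ∀ u ∈ T, L.idxOf u < L.idxOf w) ∧
          ∀ u ∈ S, L.idxOf u < L.idxOf v) ↔ ∀ u ∈ S, u ∈ P) := by
  classical
  intro S _
  have hO : IsRanking D (O.idxOf ·) := hOvalid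
  have hPC : ∀ u ∈ P, u ∈ greedyClosure D v := by
    let Q := univ.filter (· ∈ greedyClosure D v)
    have hQ (u : V) : u ∈ Q ↔ u ∈ greedyClosure D v := by simp [Q]
    have hC : IsGreedyClosed D v (greedyClosure D v) := isGreedyClosed_greedyClosure
    refine fun u hu => (hQ u).1 (hPleast Q (fun u hu => (hQ u).2 (hO.mem_of_lt hC hu)) ?_ hu)
    rintro w hwv ⟨T, hT, hTQ⟩
    exact (hQ w).2 (hC w hwv ⟨T, hT, fun u hu => (hQ u).1 (hTQ u hu)⟩)
  constructor
  · rintro ⟨L, -, -, hL, hSL⟩ u hu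
    exact IsRanking.mem_of_lt (Q := P) hL hPclosed (hSL u hu)
  · intro hSP
    obtain ⟨key, hkey, hkeyv⟩ := hO.exists_greedyClosure_lt (v := v)
    obtain ⟨L, hLnd, hLc, hLkey⟩ := exists_list_idxOf_lt_of_lt key
    refine ⟨L, hLnd, hLc, fun w => ?_, fun u hu => hLkey _ _ (hkeyv u (hPC u (hSP u hu)))⟩
    obtain ⟨T, hT, hTlt⟩ := hkey w
    exact ⟨T, hT, fun u hu => hLkey _ _ (hTlt u hu)⟩

/-- The greedy prefix-extension of the GAC propagator computes the maximal
deferral of `v`: starting from the prefix of a valid order `O` before `v` and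
closing under "add `w ≠ v` when some parent set of `w` is contained in the
current set", the resulting least closed set `P` characterises the supported
values of `v`: a value `S ∈ D v` is supported by some valid ordering iff
`S ⊆ P`. -/
theorem stmt12 {V : Type*} [Fintype V] [DecidableEq V]
    (D : V → Finset (Finset V)) (O : List V)
    (hOnd : O.Nodup) (hOc : ∀ w, w ∈ O)
    (hOvalid : ∀ w, ∃ T ∈ D w, ∀ u ∈ T, O.idxOf u < O.idxOf w)
    (v : V) (P : Finset V)
    (hPv : v ∉ P)
    (hPprefix : ∀ u, O.idxOf u < O.idxOf v → u ∈ P)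
    (hPclosed : ∀ w, w ≠ v → (∃ T ∈ D w, ∀ u ∈ T, u ∈ P) → w ∈ P)
    (hPleast : ∀ Q : Finset V,
      (∀ u, O.idxOf u < O.idxOf v → u ∈ Q) →
      (∀ w, w ≠ v → (∃ T ∈ D w, ∀ u ∈ T, u ∈ Q) → w ∈ Q) → P ⊆ Q) :
    ∀ S ∈ D v,
      ((∃ L : List V, L.Nodup ∧ (∀ w, w ∈ L) ∧
          (∀ w, ∃ T ∈ D w, ∀ u ∈ T, L.idxOf u < L.idxOf w) ∧
          ∀ u ∈ S, L.idxOf u < L.idxOf v) ↔ ∀ u ∈ S, u ∈ P) :=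
  stmt12_general D O hOvalid v P hPclosed hPleast
end

section
/- If the deletion-based minimisation algorithm returns a set N, then N admits no acyclic assignment and every proper subset of N does; in particular N is a minimal unsatisfiable set of vertices and hence a violated cluster. -/
/-- `W` is satisfiable: there is an ordering of `W` such that each vertex has
some parent set whose intersection with `W` lies among its predecessors. -/
def Sat {V : Type*} [DecidableEq V]
    (D : V → Finset (Finset V)) (W : Finset V) : Prop :=
  ∃ L : List V, L.Nodup ∧ (∀ v, v ∈ L ↔ v ∈ W) ∧
    ∀ v ∈ L, ∃ S ∈ D v, ∀ u ∈ S, u ∈ W → L.idxOf u < L.idxOf v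

/-- An execution of the deletion-based minimisation algorithm, as a relation
`Run D N C R`: from state `(N, C)` the algorithm returns `R`.  It either is
done (`C = ∅`), or removes `c ∈ C` and, if `N ∪ (C \ {c})` is satisfiable,
marks `c` as necessary, and otherwise replaces `C` by an unsatisfiable core
(unordered remainder of the greedy checker, a nonempty violated cluster inside
`N ∪ (C \ {c})`) minus `N`. -/
inductive Run {V : Type*} [DecidableEq V] (D : V → Finset (Finset V)) :
    Finset V → Finset V → Finset V → Prop
  | done (N : Finset V) : Run D N ∅ N
  | keep {N C R : Finset V} (c : V) (hc : c ∈ C)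
      (hsat : Sat D (N ∪ C.erase c))
      (h : Run D (insert c N) (C.erase c) R) : Run D N C R
  | drop {N C R : Finset V} (c : V) (C' : Finset V) (hc : c ∈ C)
      (hunsat : ¬ Sat D (N ∪ C.erase c))
      (hsub : C' ⊆ N ∪ C.erase c)
      (hne : C'.Nonempty)
      (hviol : ∀ v ∈ C', ∀ S ∈ D v, ∃ u ∈ S, u ∈ C')
      (h : Run D N (C' \ N) R) : Run D N C R

/-!
A set is satisfiable exactly when it contains no nonempty violated cluster (a nonempty set each
of whose vertices has all its parent sets meeting it): a cluster blocks its first vertex in any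
ordering, and otherwise the greedy checker can always place first a vertex with a parent set
avoiding the remaining vertices. Hence satisfiability is closed under subsets, and the algorithm
keeps the invariant that `N ∪ C` is unsatisfiable while removing any single element of `N` from
it makes it satisfiable: a kept `c` was tested on `N ∪ C.erase c ⊇ (N ∪ C).erase c`, and a new
core only shrinks `N ∪ C`. At termination `C = ∅`, so the result is minimally unsatisfiable, and
the violated cluster it contains, being itself unsatisfiable, must be all of it.
-/

section

variable {V : Type*} [DecidableEq V] {D : V → Finset (Finset V)}

def IsViolatedCluster (D : V → Finset (Finset V)) (C : Finset V) : Prop :=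
  ∀ v ∈ C, ∀ S ∈ D v, ∃ u ∈ S, u ∈ C

theorem not_sat_of_isViolatedCluster {C W : Finset V} (hCW : C ⊆ W) (hC : C.Nonempty)
    (hviol : IsViolatedCluster D C) : ¬ Sat D W := by
  rintro ⟨L, -, hmem, hpar⟩
  obtain ⟨v, hvC, hvmin⟩ := C.exists_min_image L.idxOf hC
  obtain ⟨S, hS, hSL⟩ := hpar v ((hmem v).2 (hCW hvC))
  obtain ⟨u, huS, huC⟩ := hviol v hvC S hS
  exact (hSL u huS (hCW huC)).not_ge (hvmin u huC)

theorem Sat.insert_of_disjoint {W S : Finset V} {v : V} (h : Sat D W) (hS : S ∈ D v)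
    (hSW : Disjoint S (insert v W)) : Sat D (insert v W) := by
  by_cases hvW : v ∈ W
  · rwa [Finset.insert_eq_of_mem hvW]
  obtain ⟨L, hnd, hmem, hpar⟩ := h
  refine ⟨v :: L, List.nodup_cons.2 ⟨fun hv ↦ hvW ((hmem v).1 hv), hnd⟩,
    fun u ↦ by simp [hmem], ?_⟩
  rintro w (_ | ⟨_, hwL⟩)
  · exact ⟨S, hS, fun u huS huW ↦ absurd huW (Finset.disjoint_left.1 hSW huS)⟩
  have hwv : w ≠ v := fun hwv ↦ hvW (hwv ▸ (hmem w).1 hwL)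
  obtain ⟨S', hS', hS'L⟩ := hpar w hwL
  refine ⟨S', hS', fun u huS' huW ↦ ?_⟩
  rw [List.idxOf_cons_ne _ hwv.symm]
  rcases eq_or_ne u v with rfl | huv
  · rw [List.idxOf_cons_self]
    omega
  · rw [List.idxOf_cons_ne _ huv.symm]
    have := hS'L u huS' ((Finset.mem_insert.1 huW).resolve_left huv)
    omega

theorem sat_iff_forall_not_isViolatedCluster {W : Finset V} :
    Sat D W ↔ ∀ C ⊆ W, C.Nonempty → ¬ IsViolatedCluster D C := by
  refine ⟨fun h C hCW hC hviol ↦ not_sat_of_isViolatedCluster hCW hC hviol h, fun h ↦ ?_⟩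
  induction W using Finset.strongInduction with
  | H W ih =>
    rcases W.eq_empty_or_nonempty with rfl | hW
    · exact ⟨[], List.nodup_nil, by simp, by simp⟩
    obtain ⟨v, hvW, S, hS, hSW⟩ : ∃ v ∈ W, ∃ S ∈ D v, ∀ u ∈ S, u ∉ W := by
      simpa [IsViolatedCluster] using h W subset_rfl hW
    have hrest : Sat D (W.erase v) :=
      ih _ (Finset.erase_ssubset hvW) fun C hC ↦ h C (hC.trans (Finset.erase_subset v W))
    rw [← Finset.insert_erase hvW] at hSW ⊢
    exact hrest.insert_of_disjoint hS (Finset.disjoint_left.2 hSW)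

theorem Sat.mono {W W' : Finset V} (h : Sat D W) (hW' : W' ⊆ W) : Sat D W' :=
  sat_iff_forall_not_isViolatedCluster.2 fun C hC ↦
    sat_iff_forall_not_isViolatedCluster.1 h C (hC.trans hW')

theorem minimal_not_sat_iff {W : Finset V} :
    Minimal (¬ Sat D ·) W ↔ ¬ Sat D W ∧ ∀ n ∈ W, Sat D (W.erase n) := by
  simpa only [not_not] using
    Finset.minimal_iff_forall_erase (P := (¬ Sat D ·)) fun _ _ ht hts hs ↦ ht (hs.mono hts)

theorem Minimal.isViolatedCluster {W : Finset V} (h : Minimal (¬ Sat D ·) W) :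
    IsViolatedCluster D W := by
  obtain ⟨C, hCW, hC, hviol⟩ : ∃ C ⊆ W, C.Nonempty ∧ IsViolatedCluster D C := by
    simpa [sat_iff_forall_not_isViolatedCluster] using h.prop
  rwa [← h.eq_of_le (not_sat_of_isViolatedCluster subset_rfl hC hviol) hCW]

theorem Run.minimal_not_sat {N C R : Finset V} (hrun : Run D N C R)
    (hunsat : ¬ Sat D (N ∪ C)) (hnec : ∀ n ∈ N, Sat D ((N ∪ C).erase n)) :
    Minimal (¬ Sat D ·) R := by
  induction hrun with
  | done N =>
    simp only [Finset.union_empty] at hunsat hnec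
    exact minimal_not_sat_iff.2 ⟨hunsat, hnec⟩
  | @keep N C R c hc hsat _ ih =>
    have hunion : insert c N ∪ C.erase c = N ∪ C := by
      rw [Finset.insert_union, ← Finset.union_insert, Finset.insert_erase hc]
    refine ih (hunion ▸ hunsat) ?_
    rw [hunion]
    intro n hn
    rcases Finset.mem_insert.1 hn with rfl | hn
    · refine hsat.mono ?_
      rw [Finset.erase_union_distrib]
      exact Finset.union_subset_union (Finset.erase_subset _ N) subset_rfl
    · exact hnec n hn
  | @drop N C R c C' hc _ hsub hne hviol _ ih =>
    have hshrink : N ∪ C' \ N ⊆ N ∪ C := by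
      rw [Finset.union_sdiff_self_eq_union]
      exact Finset.union_subset Finset.subset_union_left
        (hsub.trans (Finset.union_subset_union subset_rfl (Finset.erase_subset c C)))
    refine ih (not_sat_of_isViolatedCluster ?_ hne hviol) fun n hn ↦
      (hnec n hn).mono (Finset.erase_subset_erase n hshrink)
    rw [Finset.union_sdiff_self_eq_union]
    exact Finset.subset_union_right

end

theorem stmt16_general {V : Type*} [DecidableEq V]
    (D : V → Finset (Finset V)) (C N : Finset V)
    (hC : ¬ Sat D C) (hrun : Run D ∅ C N) :
    ¬ Sat D N ∧ (∀ N' ⊂ N, Sat D N') ∧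
    ∀ v ∈ N, ∀ S ∈ D v, ∃ u ∈ S, u ∈ N := by
  have hmin := hrun.minimal_not_sat (by simpa using hC) (by simp)
  exact ⟨hmin.prop, fun _ hN' ↦ not_not.1 (hmin.not_prop_of_lt hN'),
    hmin.isViolatedCluster⟩

/-- If the deletion-based minimisation algorithm, started on an unsatisfiable
set `C` with `N = ∅`, returns `N`, then `N` is unsatisfiable, every proper
subset of `N` is satisfiable, and `N` is a violated cluster: every parent set
of every vertex of `N` intersects `N`. -/
theorem stmt16 {V : Type*} [Fintype V] [DecidableEq V]
    (D : V → Finset (Finset V)) (C N : Finset V)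
    (hC : ¬ Sat D C) (hrun : Run D ∅ C N) :
    ¬ Sat D N ∧ (∀ N' ⊂ N, Sat D N') ∧
    ∀ v ∈ N, ∀ S ∈ D v, ∃ u ∈ S, u ∈ N :=
  stmt16_general D C N hC hrun
end

section
/- In a valid (topological) greedy order produced for domains D, if a value S ∈ D(v) is contained in the set of vertices preceding v in the order, then S is supported by an acyclic assignment. -/
theorem Relation.not_transGen_self_of_rank_lt {α β : Type*} [Preorder β] {r : α → α → Prop}
    (rank : α → β) (hr : ∀ a b, r a b → rank a < rank b) (a : α) :
    ¬ Relation.TransGen r a a := fun h =>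
  lt_irrefl (rank a) <| by simpa [Relation.transGen_eq_self] using h.lift rank hr

theorem stmt18_general {V : Type*} [DecidableEq V]
    (D : V → Finset (Finset V)) (L : List V)
    (T : V → Finset V) (hT : ∀ w, T w ∈ D w)
    (hTpre : ∀ w, ∀ u ∈ T w, L.idxOf u < L.idxOf w)
    (v : V) (S : Finset V) (hS : S ∈ D v)
    (hSpre : ∀ u ∈ S, L.idxOf u < L.idxOf v) :
    (∀ w, (if w = v then S else T w) ∈ D w) ∧
    ¬ ∃ z, Relation.TransGen
        (fun u w => u ∈ (if w = v then S else T w)) z z := by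
  have hpre : ∀ u w, u ∈ (if w = v then S else T w) → L.idxOf u < L.idxOf w := by
    intro u w hu
    split_ifs at hu with hw
    · exact hw ▸ hSpre u hu
    · exact hTpre w u hu
  refine ⟨fun w => ?_, fun ⟨z, hz⟩ => Relation.not_transGen_self_of_rank_lt L.idxOf hpre z hz⟩
  split_ifs with hw
  · exact hw ▸ hS
  · exact hT w

/-- In a valid greedy (topological) order `L` for domains `D`, witnessed by
parent sets `T w` preceding each `w`, any value `S ∈ D v` contained in the
predecessors of `v` is supported by an acyclic assignment, namely `f v = S` and
`f w = T w` for `w ≠ v`. -/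
theorem stmt18 {V : Type*} [Fintype V] [DecidableEq V]
    (D : V → Finset (Finset V)) (L : List V)
    (hnd : L.Nodup) (hc : ∀ w, w ∈ L)
    (T : V → Finset V) (hT : ∀ w, T w ∈ D w)
    (hTpre : ∀ w, ∀ u ∈ T w, L.idxOf u < L.idxOf w)
    (v : V) (S : Finset V) (hS : S ∈ D v)
    (hSpre : ∀ u ∈ S, L.idxOf u < L.idxOf v) :
    (∀ w, (if w = v then S else T w) ∈ D w) ∧
    ¬ ∃ z, Relation.TransGen
        (fun u w => u ∈ (if w = v then S else T w)) z z :=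
  stmt18_general D L T hT hTpre v S hS hSpre
end
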